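/- Let (Ω,F,μ) be a probability space with filtration (F_n), v a weight, and 1 < p < ∞. Suppose for each n and each B ∈ F_n and measurable f, g the inequality λ^p ∫_{B ∩ {|E_n f · E_n g| > λ}} v dμ ≤ C (∫_B |f|^{p₁} ω₁ dμ)^{p/p₁} (∫_B |g|^{p₂} ω₂ dμ)^{p/p₂} holds for all λ > 0, where 1/p = 1/p₁+1/p₂. Then ∫_Ω |E_n f · E_n g|^p v dμ ≤ C' (∫_Ω |f|^{p₁} ω₁ dμ)^{p/p₁} (∫_Ω |g|^{p₂} ω₂ dμ)^{p/p₂}, with C' depending only on C and p (via summation over the level sets B_k = {2^k < |E_n f·E_n g| ≤ 2^{k+1}} and Hölder's inequality for sums). -/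

import Mathlib

/-!
Split `{F > 0}`, where `F = |E_n f · E_n g|`, into the `F_n`-measurable dyadic level sets
`S_k = {2^k < F ≤ 2^(k+1)}`. On `S_k` we have `F^p ≤ 2^p (2^k)^p`, and the weak-type hypothesis
with `B = S_k`, `λ = 2^k` bounds `(2^k)^p ∫_{S_k} v` by `C a_k^(p/p₁) b_k^(p/p₂)`, where `a_k`,
`b_k` are the weighted integrals of `|f|^p₁` and `|g|^p₂` over `S_k`. As `p/p₁ + p/p₂ = 1`, Hölder's
inequality for sums bounds `∑ a_k^(p/p₁) b_k^(p/p₂)` by `(∑ a_k)^(p/p₁) (∑ b_k)^(p/p₂)`, and the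
`S_k` are disjoint, so `C' = 2^p C` works.
-/

open MeasureTheory Filter ENNReal

noncomputable section

theorem ENNReal.tsum_rpow_mul_rpow_le {ι : Type*} (a b : ι → ℝ≥0∞) {α β : ℝ}
    (hα : 0 < α) (hβ : 0 < β) (hαβ : α + β = 1) :
    ∑' i, a i ^ α * b i ^ β ≤ (∑' i, a i) ^ α * (∑' i, b i) ^ β := by
  have hconj : (1 / α).HolderConjugate (1 / β) :=
    ⟨by simpa only [one_div, inv_inv, inv_one] using hαβ, by positivity, by positivity⟩
  rw [ENNReal.tsum_eq_iSup_sum]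
  refine iSup_le fun s => ?_
  calc ∑ i ∈ s, a i ^ α * b i ^ β
      ≤ (∑ i ∈ s, a i) ^ α * (∑ i ∈ s, b i) ^ β := by
        simpa only [← ENNReal.rpow_mul, mul_one_div_cancel hα.ne', mul_one_div_cancel hβ.ne',
          ENNReal.rpow_one, one_div_one_div] using
          ENNReal.inner_le_Lp_mul_Lq s (a · ^ α) (b · ^ β) hconj
    _ ≤ (∑' i, a i) ^ α * (∑' i, b i) ^ β := by
        gcongr <;> exact ENNReal.sum_le_tsum s

section

variable {Ω : Type*}

def dyadicLevel (F : Ω → ℝ) (k : ℤ) : Set Ω :=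
  F ⁻¹' Set.Ioc (2 ^ k) (2 ^ (k + 1))

lemma measurableSet_dyadicLevel {_ : MeasurableSpace Ω} {F : Ω → ℝ} (hF : Measurable F)
    (k : ℤ) : MeasurableSet (dyadicLevel F k) :=
  hF measurableSet_Ioc

lemma pairwise_disjoint_dyadicLevel (F : Ω → ℝ) :
    Pairwise (Function.onFun Disjoint (dyadicLevel F)) := by
  have key : ∀ i j : ℤ, i < j → Disjoint (dyadicLevel F i) (dyadicLevel F j) := by
    refine fun i j hij => Set.disjoint_left.2 fun x hi hj => ?_
    have : (2 : ℝ) ^ (i + 1) ≤ 2 ^ j := zpow_le_zpow_right₀ one_le_two (by omega)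
    linarith [hi.2, hj.1]
  intro i j hij
  rcases hij.lt_or_gt with h | h
  exacts [key i j h, (key j i h).symm]

lemma iUnion_dyadicLevel (F : Ω → ℝ) : ⋃ k, dyadicLevel F k = {x | 0 < F x} := by
  ext x
  simp only [Set.mem_iUnion, dyadicLevel, Set.mem_preimage, Set.mem_ofPred_eq]
  exact ⟨fun ⟨k, hk⟩ => (zpow_pos two_pos k).trans hk.1,
    fun hx => exists_mem_Ioc_zpow hx one_lt_two⟩

lemma dyadicLevel_subset (F : Ω → ℝ) (k : ℤ) : dyadicLevel F k ⊆ {x | 2 ^ k < F x} :=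
  fun _ hx => hx.1

theorem lintegral_rpow_mul_le_tsum_dyadicLevel [MeasurableSpace Ω] {μ : Measure Ω}
    {F : Ω → ℝ} (hF : Measurable F) (hF0 : ∀ x, 0 ≤ F x) {p : ℝ} (hp : 0 < p)
    (V : Ω → ℝ≥0∞) :
    ∫⁻ x, ENNReal.ofReal (F x ^ p) * V x ∂μ
      ≤ ENNReal.ofReal (2 ^ p) *
          ∑' k : ℤ, ENNReal.ofReal ((2 ^ k) ^ p) * ∫⁻ x in dyadicLevel F k, V x ∂μ := by
  have hsupp : (fun x => ENNReal.ofReal (F x ^ p) * V x).support ⊆ ⋃ k, dyadicLevel F k := by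
    rw [iUnion_dyadicLevel]
    intro x hx
    refine (hF0 x).lt_of_ne' fun h => hx ?_
    simp [h, Real.zero_rpow hp.ne']
  rw [← setLIntegral_eq_of_support_subset hsupp,
    lintegral_iUnion (measurableSet_dyadicLevel hF) (pairwise_disjoint_dyadicLevel F),
    ← ENNReal.tsum_mul_left]
  refine ENNReal.tsum_le_tsum fun k => ?_
  have hpow : (2 : ℝ) ^ p * (2 ^ k) ^ p = (2 ^ (k + 1)) ^ p := by
    rw [← Real.mul_rpow zero_le_two (by positivity), zpow_add_one₀ two_ne_zero, mul_comm]
  calc ∫⁻ x in dyadicLevel F k, ENNReal.ofReal (F x ^ p) * V x ∂μ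
      ≤ ∫⁻ x in dyadicLevel F k, ENNReal.ofReal ((2 ^ (k + 1)) ^ p) * V x ∂μ := by
        refine setLIntegral_mono' (measurableSet_dyadicLevel hF k) fun x hx => ?_
        gcongr
        exacts [hF0 x, hx.2]
    _ = ENNReal.ofReal (2 ^ p) *
          (ENNReal.ofReal ((2 ^ k) ^ p) * ∫⁻ x in dyadicLevel F k, V x ∂μ) := by
        rw [lintegral_const_mul' _ _ ENNReal.ofReal_ne_top, ← mul_assoc,
          ← ENNReal.ofReal_mul (by positivity), hpow]

lemma lintegral_rpow_mul_eq_zero_of_lintegral_superlevel_eq_zero [MeasurableSpace Ω]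
    {μ : Measure Ω} {F : Ω → ℝ} (hF : Measurable F) (hF0 : ∀ x, 0 ≤ F x) {p : ℝ} (hp : 0 < p)
    {V : Ω → ℝ≥0∞} (h : ∀ lam : ℝ, 0 < lam → ∫⁻ x in {x | lam < F x}, V x ∂μ = 0) :
    ∫⁻ x, ENNReal.ofReal (F x ^ p) * V x ∂μ = 0 := by
  refine le_antisymm ((lintegral_rpow_mul_le_tsum_dyadicLevel hF hF0 hp V).trans_eq ?_) bot_le
  have hk (k : ℤ) : ∫⁻ x in dyadicLevel F k, V x ∂μ = 0 :=
    le_antisymm ((lintegral_mono_set (dyadicLevel_subset F k)).trans_eq (h _ (by positivity)))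
      bot_le
  simp [hk]

theorem lintegral_rpow_mul_le_of_weakType {m m0 : MeasurableSpace Ω} (hm : m ≤ m0)
    {μ : Measure Ω} {F : Ω → ℝ} (hF : Measurable[m] F) (hF0 : ∀ x, 0 ≤ F x)
    {p α β : ℝ} (hp : 0 < p) (hα : 0 < α) (hβ : 0 < β) (hαβ : α + β = 1)
    {V Φ Ψ : Ω → ℝ≥0∞} {c : ℝ≥0∞}
    (h : ∀ B, MeasurableSet[m] B → ∀ lam : ℝ, 0 < lam →
      ENNReal.ofReal (lam ^ p) * ∫⁻ x in B ∩ {x | lam < F x}, V x ∂μ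
        ≤ c * (∫⁻ x in B, Φ x ∂μ) ^ α * (∫⁻ x in B, Ψ x ∂μ) ^ β) :
    ∫⁻ x, ENNReal.ofReal (F x ^ p) * V x ∂μ
      ≤ ENNReal.ofReal (2 ^ p) * c * (∫⁻ x, Φ x ∂μ) ^ α * (∫⁻ x, Ψ x ∂μ) ^ β := by
  have hS (k : ℤ) : MeasurableSet[m0] (dyadicLevel F k) :=
    hm _ (measurableSet_dyadicLevel hF k)
  have hsum (Θ : Ω → ℝ≥0∞) : ∑' k : ℤ, ∫⁻ x in dyadicLevel F k, Θ x ∂μ ≤ ∫⁻ x, Θ x ∂μ := by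
    rw [← lintegral_iUnion hS (pairwise_disjoint_dyadicLevel F)]
    exact setLIntegral_le_lintegral _ _
  have hlevel (k : ℤ) : ENNReal.ofReal ((2 ^ k) ^ p) * ∫⁻ x in dyadicLevel F k, V x ∂μ
      ≤ c * ((∫⁻ x in dyadicLevel F k, Φ x ∂μ) ^ α * (∫⁻ x in dyadicLevel F k, Ψ x ∂μ) ^ β) := by
    have := h _ (measurableSet_dyadicLevel hF k) _ (zpow_pos two_pos k)
    rwa [Set.inter_eq_self_of_subset_left (dyadicLevel_subset F k), mul_assoc] at this
  calc ∫⁻ x, ENNReal.ofReal (F x ^ p) * V x ∂μ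
      ≤ ENNReal.ofReal (2 ^ p) *
          ∑' k : ℤ, ENNReal.ofReal ((2 ^ k) ^ p) * ∫⁻ x in dyadicLevel F k, V x ∂μ :=
        lintegral_rpow_mul_le_tsum_dyadicLevel (hF.mono hm le_rfl) hF0 hp V
    _ ≤ ENNReal.ofReal (2 ^ p) * c * ∑' k : ℤ,
          (∫⁻ x in dyadicLevel F k, Φ x ∂μ) ^ α * (∫⁻ x in dyadicLevel F k, Ψ x ∂μ) ^ β := by
        rw [mul_assoc, ← ENNReal.tsum_mul_left (a := c)]
        exact mul_le_mul_right (ENNReal.tsum_le_tsum hlevel) _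
    _ ≤ ENNReal.ofReal (2 ^ p) * c * (∑' k : ℤ, ∫⁻ x in dyadicLevel F k, Φ x ∂μ) ^ α *
          (∑' k : ℤ, ∫⁻ x in dyadicLevel F k, Ψ x ∂μ) ^ β :=
        (mul_le_mul_right (ENNReal.tsum_rpow_mul_rpow_le _ _ hα hβ hαβ) _).trans_eq
          (mul_assoc _ _ _).symm
    _ ≤ ENNReal.ofReal (2 ^ p) * c * (∫⁻ x, Φ x ∂μ) ^ α * (∫⁻ x, Ψ x ∂μ) ^ β := by
        gcongr <;> exact hsum _

lemma ofReal_integral_rpow [MeasurableSpace Ω] {μ : Measure Ω} {f : Ω → ℝ}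
    (hf : Integrable f μ) (hf0 : ∀ x, 0 ≤ f x) {α : ℝ} (hα : 0 ≤ α) :
    ENNReal.ofReal ((∫ x, f x ∂μ) ^ α) = (∫⁻ x, ENNReal.ofReal (f x) ∂μ) ^ α := by
  rw [← ofReal_integral_eq_lintegral_ofReal hf (ae_of_all _ hf0),
    ENNReal.ofReal_rpow_of_nonneg (integral_nonneg hf0) hα]

theorem integral_rpow_mul_le_of_weakType {m m0 : MeasurableSpace Ω} (hm : m ≤ m0)
    {μ : Measure Ω} {F v Φ Ψ : Ω → ℝ} (hF : Measurable[m] F) (hF0 : ∀ x, 0 ≤ F x)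
    (hv0 : ∀ x, 0 ≤ v x) (hv : Integrable v μ) (hΦ0 : ∀ x, 0 ≤ Φ x) (hΨ0 : ∀ x, 0 ≤ Ψ x)
    {p α β C : ℝ} (hp : 0 < p) (hα : 0 < α) (hβ : 0 < β) (hαβ : α + β = 1) (hC : 0 ≤ C)
    (h : ∀ B, MeasurableSet[m] B → ∀ lam : ℝ, 0 < lam →
      lam ^ p * ∫ x in B ∩ {x | lam < F x}, v x ∂μ
        ≤ C * (∫ x in B, Φ x ∂μ) ^ α * (∫ x in B, Ψ x ∂μ) ^ β) :
    ∫ x, F x ^ p * v x ∂μ ≤ 2 ^ p * C * (∫ x, Φ x ∂μ) ^ α * (∫ x, Ψ x ∂μ) ^ β := by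
  have hweak (B : Set Ω) (hB : MeasurableSet[m] B) (lam : ℝ) (hlam : 0 < lam) :
      ENNReal.ofReal (lam ^ p) * ∫⁻ x in B ∩ {x | lam < F x}, ENNReal.ofReal (v x) ∂μ
        ≤ ENNReal.ofReal (C * (∫ x in B, Φ x ∂μ) ^ α * (∫ x in B, Ψ x ∂μ) ^ β) := by
    rw [← ofReal_integral_eq_lintegral_ofReal hv.integrableOn (ae_of_all _ hv0),
      ← ENNReal.ofReal_mul (by positivity)]
    exact ENNReal.ofReal_le_ofReal (h B hB lam hlam)
  have hF' : Measurable[m0] F := hF.mono hm le_rfl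
  have ha : 0 ≤ ∫ x, Φ x ∂μ := integral_nonneg hΦ0
  have hb : 0 ≤ ∫ x, Ψ x ∂μ := integral_nonneg hΨ0
  rw [integral_eq_lintegral_of_nonneg_ae
    (ae_of_all _ fun x => mul_nonneg (Real.rpow_nonneg (hF0 x) p) (hv0 x))
    ((hF'.pow_const p).aestronglyMeasurable.mul hv.1)]
  refine ENNReal.toReal_le_of_le_ofReal (by positivity) ?_
  simp_rw [ENNReal.ofReal_mul (Real.rpow_nonneg (hF0 _) p)]
  by_cases hint : Integrable Φ μ ∧ Integrable Ψ μ
  · obtain ⟨hΦ, hΨ⟩ := hint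
    have hofReal (B : Set Ω) :
        ENNReal.ofReal (C * (∫ x in B, Φ x ∂μ) ^ α * (∫ x in B, Ψ x ∂μ) ^ β)
          = ENNReal.ofReal C * (∫⁻ x in B, ENNReal.ofReal (Φ x) ∂μ) ^ α
              * (∫⁻ x in B, ENNReal.ofReal (Ψ x) ∂μ) ^ β := by
      rw [ENNReal.ofReal_mul (mul_nonneg hC (Real.rpow_nonneg (integral_nonneg hΦ0) _)),
        ENNReal.ofReal_mul hC, ofReal_integral_rpow hΦ.integrableOn hΦ0 hα.le,
        ofReal_integral_rpow hΨ.integrableOn hΨ0 hβ.le]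
    refine (lintegral_rpow_mul_le_of_weakType hm hF hF0 hp hα hβ hαβ
      fun B hB lam hlam => (hweak B hB lam hlam).trans_eq (hofReal B)).trans_eq ?_
    have huniv := hofReal Set.univ
    rw [Measure.restrict_univ] at huniv
    rw [show ∀ a b c d : ℝ, a * b * c * d = a * (b * c * d) by intros; ring,
      ENNReal.ofReal_mul (by positivity), huniv]
    ring
  · -- a non-integrable weight gives the junk value `∫ = 0`, so the right-hand side vanishes and
    -- the weak-type bound for `B = univ` makes every superlevel set of `F` `v`-null
    have hzero : C * (∫ x, Φ x ∂μ) ^ α * (∫ x, Ψ x ∂μ) ^ β = 0 := by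
      rcases not_and_or.1 hint with h | h
      · rw [integral_undef h, Real.zero_rpow hα.ne', mul_zero, zero_mul]
      · rw [integral_undef h, Real.zero_rpow hβ.ne', mul_zero]
    rw [lintegral_rpow_mul_eq_zero_of_lintegral_superlevel_eq_zero hF' hF0 hp fun lam hlam => ?_]
    · exact zero_le
    have := hweak Set.univ MeasurableSet.univ lam hlam
    simp only [Measure.restrict_univ, Set.univ_inter, hzero, ENNReal.ofReal_zero] at this
    exact (mul_eq_zero.1 (nonpos_iff_eq_zero.1 this)).resolve_left
      (ENNReal.ofReal_pos.2 (by positivity)).ne'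

end

theorem stmt_18_general
    {Ω : Type*} {m0 : MeasurableSpace Ω} {μ : Measure Ω}
    (ℱ : Filtration ℕ m0)
    (v ω₁ ω₂ : Ω → ℝ)
    (hv : ∀ x, 0 < v x) (hω₁ : ∀ x, 0 < ω₁ x) (hω₂ : ∀ x, 0 < ω₂ x)
    (hvI : Integrable v μ)
    (p p₁ p₂ C : ℝ) (hp : 1 < p) (hp₁ : 1 < p₁) (hp₂ : 1 < p₂)
    (hpp : 1 / p = 1 / p₁ + 1 / p₂) (hC : 0 < C)
    (n : ℕ)
    (H : ∀ B : Set Ω, MeasurableSet[ℱ n] B →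
      ∀ f g : Ω → ℝ, Integrable f μ → Integrable g μ →
      ∀ lam : ℝ, 0 < lam →
        lam ^ p * ∫ x in B ∩ {x | lam < |(μ[f|ℱ n]) x * (μ[g|ℱ n]) x|}, v x ∂μ
          ≤ C * (∫ x in B, |f x| ^ p₁ * ω₁ x ∂μ) ^ (p / p₁)
              * (∫ x in B, |g x| ^ p₂ * ω₂ x ∂μ) ^ (p / p₂)) :
    ∃ C' : ℝ, 0 < C' ∧
      ∀ f g : Ω → ℝ, Integrable f μ → Integrable g μ →
        ∫ x, |(μ[f|ℱ n]) x * (μ[g|ℱ n]) x| ^ p * v x ∂μ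
          ≤ C' * (∫ x, |f x| ^ p₁ * ω₁ x ∂μ) ^ (p / p₁)
              * (∫ x, |g x| ^ p₂ * ω₂ x ∂μ) ^ (p / p₂) := by
  have hp0 : 0 < p := by linarith
  have hαβ : p / p₁ + p / p₂ = 1 := by
    rw [div_eq_mul_one_div p p₁, div_eq_mul_one_div p p₂, ← mul_add, ← hpp,
      mul_one_div_cancel hp0.ne']
  refine ⟨2 ^ p * C, by positivity, fun f g hf hg => ?_⟩
  have hf' : StronglyMeasurable[ℱ n] (μ[f|ℱ n]) := stronglyMeasurable_condExp
  have hg' : StronglyMeasurable[ℱ n] (μ[g|ℱ n]) := stronglyMeasurable_condExp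
  exact integral_rpow_mul_le_of_weakType (ℱ.le n)
    (continuous_abs.measurable.comp (hf'.measurable.mul hg'.measurable)) (fun _ => abs_nonneg _)
    (fun x => (hv x).le) hvI (fun x => mul_nonneg (by positivity) (hω₁ x).le)
    (fun x => mul_nonneg (by positivity) (hω₂ x).le) hp0 (div_pos hp0 (by linarith))
    (div_pos hp0 (by linarith)) hαβ hC.le (H · · f g hf hg)

theorem stmt_18
    {Ω : Type*} {m0 : MeasurableSpace Ω} {μ : Measure Ω} [IsProbabilityMeasure μ]
    (ℱ : Filtration ℕ m0)
    (v ω₁ ω₂ : Ω → ℝ)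
    (hv : ∀ x, 0 < v x) (hω₁ : ∀ x, 0 < ω₁ x) (hω₂ : ∀ x, 0 < ω₂ x)
    (hvI : Integrable v μ) (hω₁I : Integrable ω₁ μ) (hω₂I : Integrable ω₂ μ)
    (p p₁ p₂ C : ℝ) (hp : 1 < p) (hp₁ : 1 < p₁) (hp₂ : 1 < p₂)
    (hpp : 1 / p = 1 / p₁ + 1 / p₂) (hC : 0 < C)
    (n : ℕ)
    (H : ∀ B : Set Ω, MeasurableSet[ℱ n] B →
      ∀ f g : Ω → ℝ, Integrable f μ → Integrable g μ →
      ∀ lam : ℝ, 0 < lam →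
        lam ^ p * ∫ x in B ∩ {x | lam < |(μ[f|ℱ n]) x * (μ[g|ℱ n]) x|}, v x ∂μ
          ≤ C * (∫ x in B, |f x| ^ p₁ * ω₁ x ∂μ) ^ (p / p₁)
              * (∫ x in B, |g x| ^ p₂ * ω₂ x ∂μ) ^ (p / p₂)) :
    ∃ C' : ℝ, 0 < C' ∧
      ∀ f g : Ω → ℝ, Integrable f μ → Integrable g μ →
        ∫ x, |(μ[f|ℱ n]) x * (μ[g|ℱ n]) x| ^ p * v x ∂μ
          ≤ C' * (∫ x, |f x| ^ p₁ * ω₁ x ∂μ) ^ (p / p₁)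
              * (∫ x, |g x| ^ p₂ * ω₂ x ∂μ) ^ (p / p₂) :=
  stmt_18_general ℱ v ω₁ ω₂ hv hω₁ hω₂ hvI p p₁ p₂ C hp hp₁ hp₂ hpp hC n H

end
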